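/- arXiv:1411.3597 — 3 statements merged into one kernel-verified Lean document; each statement's English description precedes it below -/
import Mathlib

section
/- With a uniform scalar quantizer Q of cell width Δ and dither Z ~ Uniform[-Δ/2, Δ/2] independent of X, the random variable N := Q(X+Z) - Z - X is uniformly distributed on [-Δ/2, Δ/2] and is independent of X. -/
open MeasureTheory ProbabilityTheory

/-- Uniform scalar quantizer with cell width `Δ`: maps `x` to the nearest point of `Δ·ℤ`. -/
noncomputable def uniformQuantizer (Δ x : ℝ) : ℝ := Δ * ((⌊x / Δ + 1 / 2⌋ : ℤ) : ℝ)

/-- The uniform probability measure on `[a, b]`. -/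
noncomputable def uniformMeasure (a b : ℝ) : Measure ℝ :=
  (ENNReal.ofReal (b - a))⁻¹ • (volume.restrict (Set.Icc a b))

/-!
For a fixed value `x` of `X`, the noise `Q(x + z) - z - x` is the representative of
`-(x + z)` in `(-Δ/2, Δ/2]` modulo `Δ`, so `z ↦ Q(x + z) - z - x` is a reflection of the
circle `ℝ/Δℤ` and preserves the uniform law on a period. Hence the skew map
`(x, z) ↦ (x, Q(x + z) - z - x)` preserves the product law of the independent pair `(X, Z)`,
which gives at once the law of the noise and its independence from `X`.
-/

open Set

theorem uniformMeasure_eq_smul_restrict_Ioc (a b : ℝ) :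
    uniformMeasure a b = (ENNReal.ofReal (b - a))⁻¹ • volume.restrict (Ioc a b) := by
  rw [uniformMeasure, Measure.restrict_congr_set Ioc_ae_eq_Icc]

@[fun_prop]
theorem measurable_uniformQuantizer (Δ : ℝ) : Measurable (uniformQuantizer Δ) := by
  unfold uniformQuantizer
  fun_prop

theorem uniformQuantizer_sub_self {Δ : ℝ} (hΔ : 0 < Δ) (y : ℝ) :
    uniformQuantizer Δ y - y = toIocMod hΔ (-(Δ / 2)) (-y) := by
  have hfloor : (-(Δ / 2) + Δ - -y) / Δ = y / Δ + 1 / 2 := by field_simp; ring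
  rw [toIocMod, toIocDiv_eq_neg_floor, hfloor, uniformQuantizer, neg_zsmul, zsmul_eq_mul]
  ring

theorem AddCircle.measurePreserving_coe_equivIoc (p : ℝ) [Fact (0 < p)] (a : ℝ) :
    MeasurePreserving (fun u : AddCircle p => (AddCircle.equivIoc p a u : ℝ))
      volume (volume.restrict (Ioc a (a + p))) :=
  (measurePreserving_subtype_coe measurableSet_Ioc).comp (AddCircle.measurePreserving_equivIoc p)

theorem measurePreserving_toIocMod_sub {p : ℝ} (hp : 0 < p) (a c : ℝ) :
    MeasurePreserving (fun z => toIocMod hp a (c - z))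
      (volume.restrict (Ioc a (a + p))) (volume.restrict (Ioc a (a + p))) := by
  have : Fact (0 < p) := ⟨hp⟩
  have hfactor : (fun z => toIocMod hp a (c - z))
      = (fun u : AddCircle p => (AddCircle.equivIoc p a u : ℝ)) ∘ (fun u => (c : AddCircle p) - u)
        ∘ ((↑) : ℝ → AddCircle p) :=
    rfl
  rw [hfactor]
  exact (AddCircle.measurePreserving_coe_equivIoc p a).comp
    ((Measure.measurePreserving_sub_left volume _).comp (AddCircle.measurePreserving_mk p a))

theorem map_toIocMod_sub_uniformMeasure {p : ℝ} (hp : 0 < p) (a c : ℝ) :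
    (uniformMeasure a (a + p)).map (fun z => toIocMod hp a (c - z))
      = uniformMeasure a (a + p) := by
  rw [uniformMeasure_eq_smul_restrict_Ioc, Measure.map_smul,
    (measurePreserving_toIocMod_sub hp a c).map_eq]

theorem map_quantizationNoise_uniformMeasure {Δ : ℝ} (hΔ : 0 < Δ) (x : ℝ) :
    (uniformMeasure (-(Δ / 2)) (Δ / 2)).map (fun z => uniformQuantizer Δ (x + z) - z - x)
      = uniformMeasure (-(Δ / 2)) (Δ / 2) := by
  have hnoise : (fun z => uniformQuantizer Δ (x + z) - z - x)
      = fun z => toIocMod hΔ (-(Δ / 2)) (-x - z) := by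
    funext z
    rw [sub_sub, add_comm z x, uniformQuantizer_sub_self hΔ, neg_add']
  have hmap := map_toIocMod_sub_uniformMeasure hΔ (-(Δ / 2)) (-x)
  rw [show -(Δ / 2) + Δ = Δ / 2 by ring] at hmap
  rw [hnoise, hmap]

section SkewProduct

variable {Ω α β : Type*} [MeasurableSpace Ω] [MeasurableSpace α] [MeasurableSpace β]
  {P : Measure Ω} [IsProbabilityMeasure P] {X : Ω → α} {Z : Ω → β} {g : α → β → β}

theorem ProbabilityTheory.IndepFun.map_prodMk_skew_eq_prod (hXZ : IndepFun X Z P)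
    (hX : AEMeasurable X P) (hZ : AEMeasurable Z P) (hg : Measurable (Function.uncurry g))
    (hgZ : ∀ᵐ x ∂P.map X, (P.map Z).map (g x) = P.map Z) :
    P.map (fun ω => (X ω, g (X ω) (Z ω))) = (P.map X).prod (P.map Z) := by
  have hskew := (MeasurePreserving.id (P.map X)).skew_product hg hgZ
  have hjoint := (indepFun_iff_map_prod_eq_prod_map_map hX hZ).mp hXZ
  calc P.map (fun ω => (X ω, g (X ω) (Z ω)))
      = (P.map fun ω => (X ω, Z ω)).map (fun p => (id p.1, g p.1 p.2)) :=
        (AEMeasurable.map_map_of_aemeasurable hskew.measurable.aemeasurable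
          (hX.prodMk hZ)).symm
    _ = (P.map X).prod (P.map Z) := by rw [hjoint, hskew.map_eq]

theorem ProbabilityTheory.IndepFun.map_skew_eq_and_indepFun (hXZ : IndepFun X Z P)
    (hX : AEMeasurable X P) (hZ : AEMeasurable Z P) (hg : Measurable (Function.uncurry g))
    (hgZ : ∀ᵐ x ∂P.map X, (P.map Z).map (g x) = P.map Z) :
    P.map (fun ω => g (X ω) (Z ω)) = P.map Z ∧ IndepFun X (fun ω => g (X ω) (Z ω)) P := by
  have : IsProbabilityMeasure (P.map X) := Measure.isProbabilityMeasure_map hX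
  have hgXZ : AEMeasurable (fun ω => g (X ω) (Z ω)) P := hg.comp_aemeasurable (hX.prodMk hZ)
  have hjoint := hXZ.map_prodMk_skew_eq_prod hX hZ hg hgZ
  have hlaw : P.map (fun ω => g (X ω) (Z ω)) = P.map Z := by
    rw [← Measure.snd_map_prodMk₀ hX, hjoint, Measure.snd_prod]
  refine ⟨hlaw, ?_⟩
  rw [indepFun_iff_map_prod_eq_prod_map_map hX hgXZ, hjoint, hlaw]

end SkewProduct

/-- With a uniform scalar quantizer `Q` of cell width `Δ` and dither `Z ~ Uniform[-Δ/2, Δ/2]`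
independent of `X`, the quantization noise `N = Q(X+Z) - Z - X` is uniformly distributed on
`[-Δ/2, Δ/2]` and independent of `X`. -/
theorem dithered_quantization_noise_uniform_indep
    {Ω : Type*} [MeasurableSpace Ω] (P : Measure Ω) [IsProbabilityMeasure P]
    (X Z : Ω → ℝ) (hX : Measurable X) (hZ : Measurable Z)
    (Δ : ℝ) (hΔ : 0 < Δ)
    (hlaw : Measure.map Z P = uniformMeasure (-(Δ / 2)) (Δ / 2))
    (hindep : IndepFun X Z P) :
    Measure.map (fun ω => uniformQuantizer Δ (X ω + Z ω) - Z ω - X ω) P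
        = uniformMeasure (-(Δ / 2)) (Δ / 2) ∧
      IndepFun X (fun ω => uniformQuantizer Δ (X ω + Z ω) - Z ω - X ω) P := by
  have hnoise := map_quantizationNoise_uniformMeasure hΔ
  rw [← hlaw] at hnoise ⊢
  exact hindep.map_skew_eq_and_indepFun hX.aemeasurable hZ.aemeasurable
    (g := fun x z => uniformQuantizer Δ (x + z) - z - x) (by fun_prop) (ae_of_all _ hnoise)
end

section
/- Let Y be a discrete random variable taking values in the lattice Δℤ, obtained as Y = Q(X + Z) where Z ~ Uniform[-Δ/2, Δ/2] is independent of X, and let Q be side information independent of Z. Then the conditional entropy of Y given (X̂ = q, Z averaged out) equals the mutual information: H(Y | X̂ = q, Z) = h(X + Z | X̂ = q) − log Δ = I(X; X + Z | X̂ = q). -/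
open MeasureTheory Real
open scoped Convolution

/-!
`g` is the convolution of `f` with the uniform density on `[-Δ/2, Δ/2]`, hence integrable with
total mass `1`. Since `t ↦ (Δ t) log (Δ t)` splits as `Δ log Δ · t + Δ · t log t`, the
summand `Δ g (jΔ - z) log (Δ g (jΔ - z))` is integrable in `u = jΔ - z`; as `j` runs over `ℤ`
and `z` over the dither interval, `u` tiles the real line, so averaging the sum over `z` gives
`(1/Δ) ∫ (Δ g) log (Δ g) = log Δ + ∫ g log g`.
-/

noncomputable def uniformDensity (Δ : ℝ) : ℝ → ℝ :=
  (Set.Icc (-(Δ / 2)) (Δ / 2)).indicator fun _ => 1 / Δ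

lemma integrable_uniformDensity (Δ : ℝ) : Integrable (uniformDensity Δ) :=
  (integrableOn_const measure_Icc_lt_top.ne).integrable_indicator measurableSet_Icc

lemma integral_uniformDensity {Δ : ℝ} (hΔ : 0 < Δ) : ∫ x, uniformDensity Δ x = 1 := by
  rw [uniformDensity, integral_indicator_const _ measurableSet_Icc,
    volume_real_Icc_of_le (by linarith), smul_eq_mul, show Δ / 2 - -(Δ / 2) = Δ by ring]
  field_simp

lemma setIntegral_Icc_inv_mul_log_inv {Δ : ℝ} (hΔ : 0 < Δ) :
    ∫ _ in Set.Icc (-(Δ / 2)) (Δ / 2), (1 / Δ) * log (1 / Δ) = -log Δ := by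
  rw [setIntegral_const, volume_real_Icc_of_le (by linarith), smul_eq_mul, one_div, log_inv,
    show Δ / 2 - -(Δ / 2) = Δ by ring]
  field_simp

lemma boxAverage_eq_convolution_uniformDensity (f : ℝ → ℝ) (Δ u : ℝ) :
    (1 / Δ) * ∫ x in Set.Icc (u - Δ / 2) (u + Δ / 2), f x
      = (f ⋆[ContinuousLinearMap.mul ℝ ℝ] uniformDensity Δ) u := by
  have hpoint : ∀ t, f t * uniformDensity Δ (u - t)
      = (Set.Icc (u - Δ / 2) (u + Δ / 2)).indicator (fun x => f x * (1 / Δ)) t := by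
    intro t
    simp only [uniformDensity, Set.indicator_apply, Set.mem_Icc]
    by_cases ht : u - Δ / 2 ≤ t ∧ t ≤ u + Δ / 2
    · rw [if_pos ⟨by linarith, by linarith⟩, if_pos ht]
    · rw [if_neg fun h => ht ⟨by linarith, by linarith⟩, if_neg ht, mul_zero]
  simp only [convolution, ContinuousLinearMap.mul_apply', hpoint,
    integral_indicator measurableSet_Icc, integral_mul_const]
  ring

lemma mul_log_const_mul (c y : ℝ) :
    c * y * log (c * y) = c * log c * y + c * (y * log y) := by
  have h := negMulLog_mul c y
  simp only [negMulLog] at h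
  linarith

lemma hasSum_setIntegral_Ioc_add_zsmul {E : Type*} [NormedAddCommGroup E] [NormedSpace ℝ E]
    {μ : Measure ℝ} {h : ℝ → E} (hh : Integrable h μ) {T : ℝ} (hT : 0 < T) (a : ℝ) :
    HasSum (fun j : ℤ => ∫ u in Set.Ioc (a + j • T) (a + (j + 1) • T), h u ∂μ) (∫ u, h u ∂μ) := by
  rw [← setIntegral_univ, ← iUnion_Ioc_add_zsmul hT a]
  exact hasSum_integral_iUnion (fun _ => measurableSet_Ioc)
    (Set.pairwise_disjoint_Ioc_add_zsmul a T) hh.integrableOn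

lemma setIntegral_Icc_comp_sub_eq_setIntegral_Ioc {E : Type*} [NormedAddCommGroup E]
    [NormedSpace ℝ E] (h : ℝ → E) {Δ : ℝ} (hΔ : 0 < Δ) (j : ℤ) :
    ∫ z in Set.Icc (-(Δ / 2)) (Δ / 2), h (j * Δ - z)
      = ∫ u in Set.Ioc (-(Δ / 2) + j • Δ) (-(Δ / 2) + (j + 1) • Δ), h u := by
  rw [integral_Icc_eq_integral_Ioc, ← intervalIntegral.integral_of_le (by linarith),
    intervalIntegral.integral_comp_sub_left, intervalIntegral.integral_of_le (by linarith)]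
  simp only [zsmul_eq_mul]
  push_cast
  ring_nf

theorem setIntegral_Icc_tsum_comp_sub {E : Type*} [NormedAddCommGroup E] [NormedSpace ℝ E]
    [CompleteSpace E] {h : ℝ → E} (hh : Integrable h) {Δ : ℝ} (hΔ : 0 < Δ) :
    ∫ z in Set.Icc (-(Δ / 2)) (Δ / 2), ∑' j : ℤ, h (j * Δ - z) = ∫ u, h u := by
  have hnorm := setIntegral_Icc_comp_sub_eq_setIntegral_Ioc (fun u => ‖h u‖) hΔ
  have hsum : Summable fun j : ℤ => ∫ z in Set.Icc (-(Δ / 2)) (Δ / 2), ‖h (j * Δ - z)‖ :=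
    (hasSum_setIntegral_Ioc_add_zsmul hh.norm hΔ _).summable.congr fun j => (hnorm j).symm
  calc ∫ z in Set.Icc (-(Δ / 2)) (Δ / 2), ∑' j : ℤ, h (j * Δ - z)
      = ∑' j : ℤ, ∫ z in Set.Icc (-(Δ / 2)) (Δ / 2), h (j * Δ - z) :=
        (integral_tsum_of_summable_integral_norm
          (fun j => (hh.comp_sub_left _).integrableOn) hsum).symm
    _ = ∫ u, h u := by
        rw [tsum_congr (setIntegral_Icc_comp_sub_eq_setIntegral_Ioc h hΔ)]
        exact (hasSum_setIntegral_Ioc_add_zsmul hh hΔ _).tsum_eq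

theorem dithered_entropy_eq_mutual_information_general
    (Δ : ℝ) (hΔ : 0 < Δ) (f : ℝ → ℝ)
    (hf1 : ∫ x, f x = 1)
    (g : ℝ → ℝ)
    (hg : g = fun u => (1 / Δ) * ∫ x in Set.Icc (u - Δ / 2) (u + Δ / 2), f x)
    (hint : Integrable (fun u => g u * log (g u))) :
    ((1 / Δ) * ∫ z in Set.Icc (-(Δ / 2)) (Δ / 2),
        (-∑' j : ℤ, (Δ * g ((j : ℝ) * Δ - z)) * log (Δ * g ((j : ℝ) * Δ - z)))
      = (-∫ u, g u * log (g u)) - log Δ) ∧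
    ((-∫ u, g u * log (g u)) - log Δ
      = (-∫ u, g u * log (g u))
        - (-∫ z in Set.Icc (-(Δ / 2)) (Δ / 2), (1 / Δ) * log (1 / Δ))) := by
  have hf : Integrable f := .of_integral_ne_zero (by simp [hf1])
  have hg_conv : g = f ⋆[ContinuousLinearMap.mul ℝ ℝ] uniformDensity Δ :=
    hg.trans (funext (boxAverage_eq_convolution_uniformDensity f Δ))
  have hg_int : Integrable g :=
    hg_conv ▸ hf.integrable_convolution _ (integrable_uniformDensity Δ)
  have hg_one : ∫ u, g u = 1 := by
    rw [hg_conv, integral_convolution _ hf (integrable_uniformDensity Δ), hf1,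
      integral_uniformDensity hΔ, ContinuousLinearMap.mul_apply', one_mul]
  have hψ : (fun u => Δ * g u * log (Δ * g u))
      = fun u => Δ * log Δ * g u + Δ * (g u * log (g u)) :=
    funext fun u => mul_log_const_mul Δ (g u)
  have hψ_int : Integrable fun u => Δ * g u * log (Δ * g u) :=
    hψ ▸ (hg_int.const_mul _).add (hint.const_mul _)
  refine ⟨?_, by rw [setIntegral_Icc_inv_mul_log_inv hΔ]; ring⟩
  rw [integral_neg, setIntegral_Icc_tsum_comp_sub hψ_int hΔ, hψ,
    integral_add (hg_int.const_mul _) (hint.const_mul _), integral_const_mul,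
    integral_const_mul, hg_one]
  field_simp
  ring

/-- The key identity in Section 3 (conditionally on the reconstruction value `X̂ = q`):
let `f` be the (conditional) density of `X`, `Z ~ Uniform[-Δ/2, Δ/2]` independent of `X`,
`Y = Q(X + Z)` the dithered uniform quantizer output, and `g = f ∗ f_Z` the density of
`U = X + Z`, so that `P(Y = jΔ | Z = z) = Δ·g(jΔ − z)`. Then the conditional entropy of `Y`
given `Z` (averaged over the dither) equals `h(X + Z) − log Δ`, which equals the mutual
information `I(X; X + Z) = h(X + Z) − h(Z)` since `h(Z) = log Δ`. -/
theorem dithered_entropy_eq_mutual_information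
    (Δ : ℝ) (hΔ : 0 < Δ) (f : ℝ → ℝ) (hf : Measurable f) (hf0 : ∀ x, 0 ≤ f x)
    (hf1 : ∫ x, f x = 1)
    (g : ℝ → ℝ)
    (hg : g = fun u => (1 / Δ) * ∫ x in Set.Icc (u - Δ / 2) (u + Δ / 2), f x)
    (hint : Integrable (fun u => g u * log (g u))) :
    ((1 / Δ) * ∫ z in Set.Icc (-(Δ / 2)) (Δ / 2),
        (-∑' j : ℤ, (Δ * g ((j : ℝ) * Δ - z)) * log (Δ * g ((j : ℝ) * Δ - z)))
      = (-∫ u, g u * log (g u)) - log Δ) ∧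
    ((-∫ u, g u * log (g u)) - log Δ
      = (-∫ u, g u * log (g u))
        - (-∫ z in Set.Icc (-(Δ / 2)) (Δ / 2), (1 / Δ) * log (1 / Δ))) :=
  dithered_entropy_eq_mutual_information_general Δ hΔ f hf1 g hg hint
end

section
/- In the Slepian–Wolf setting with side information S available only to the two encoders but not to the decoder, any achievable rate pair (R̃₁, R̃₂) must satisfy R̃₁ + R̃₂ ≥ H(Y₁, Y₂). -/
/-!
Suppose `R₁ + R₂ < H`. For a fixed value `s` of the side information, the decoder output is a
function of the index pair, so at most `M₁ M₂` source blocks are decoded correctly. Blocks of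
probability at most `2^{-n(H-ε)}` therefore contribute at most `|𝒮| M₁ M₂ 2^{-n(H-ε)} ≤ |𝒮| 2^{-nε}`
to the success probability, and by Chebyshev's inequality for the information `-log₂ p` of the
i.i.d. letters (whose variance is the varentropy) the more probable blocks have total probability
`O(1/n)`. Hence the success probability tends to `0`, contradicting an error probability `≤ 1/2`.
-/

open Real Finset Filter Topology

lemma Finset.sum_filter_le_abs_le_sum_mul_sq_div {ι : Type*} (s : Finset ι) {w X : ι → ℝ}
    (hw : ∀ i ∈ s, 0 ≤ w i) {t : ℝ} (ht : 0 < t) :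
    ∑ i ∈ s with t ≤ |X i|, w i ≤ (∑ i ∈ s, w i * X i ^ 2) / t ^ 2 := by
  rw [le_div_iff₀ (by positivity), sum_mul]
  calc ∑ i ∈ s with t ≤ |X i|, w i * t ^ 2
      ≤ ∑ i ∈ s with t ≤ |X i|, w i * X i ^ 2 := by
        refine sum_le_sum fun i hi => ?_
        rw [mem_filter] at hi
        have hsq : t ^ 2 ≤ X i ^ 2 := sq_abs (X i) ▸ pow_le_pow_left₀ ht.le hi.2 2
        exact mul_le_mul_of_nonneg_left hsq (hw i hi.1)
    _ ≤ ∑ i ∈ s, w i * X i ^ 2 :=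
        sum_le_sum_of_subset_of_nonneg (filter_subset _ _)
          fun i hi _ => mul_nonneg (hw i hi) (sq_nonneg _)

section IID
variable {β : Type*} {p : β → ℝ}

lemma sum_neg_logb_lt_of_rpow_neg_lt_prod {n : ℕ} {z : Fin n → β} {a : ℝ}
    (h : (2 : ℝ) ^ (-a) < ∏ i, p (z i)) : ∑ k, -logb 2 (p (z k)) < a := by
  have hpos : 0 < ∏ i, p (z i) := (rpow_pos_of_pos two_pos _).trans h
  have hne : ∀ i ∈ univ, p (z i) ≠ 0 := fun i _ hi => hpos.ne' (prod_eq_zero (mem_univ i) hi)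
  have hlog := logb_lt_logb (b := 2) one_lt_two (rpow_pos_of_pos two_pos _) h
  rw [logb_rpow two_pos (by norm_num), logb_prod _ _ hne] at hlog
  rw [sum_neg_distrib]
  linarith

variable [Fintype β]

noncomputable def entropy (p : β → ℝ) : ℝ := -∑ x, p x * logb 2 (p x)

noncomputable def varentropy (p : β → ℝ) : ℝ := ∑ x, p x * (-logb 2 (p x) - entropy p) ^ 2

lemma sum_prod_pi_mul_fin_succ {n : ℕ} (F : (Fin (n + 1) → β) → ℝ) :
    ∑ z, (∏ i, p (z i)) * F z
      = ∑ x, p x * ∑ z : Fin n → β, (∏ i, p (z i)) * F (Fin.cons x z) := by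
  rw [← (Fin.consEquiv fun _ => β).sum_comp, Fintype.sum_prod_type]
  change ∑ x, ∑ z : Fin n → β, (∏ i, p (Fin.cons x z i : β)) * F (Fin.cons x z) = _
  simp only [Fin.prod_univ_succ, Fin.cons_zero, Fin.cons_succ, mul_sum, mul_assoc]

lemma sum_prod_pi_eq_one (hp1 : ∑ x, p x = 1) (n : ℕ) :
    ∑ z : Fin n → β, ∏ i, p (z i) = 1 := by
  rw [← Fintype.sum_pow, hp1, one_pow]

lemma sum_prod_pi_mul_sum_eq_zero (hp1 : ∑ x, p x = 1) {g : β → ℝ} (hg : ∑ x, p x * g x = 0)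
    (n : ℕ) : ∑ z : Fin n → β, (∏ i, p (z i)) * ∑ k, g (z k) = 0 := by
  induction n with
  | zero => simp
  | succ n ih =>
    have h : ∀ x, ∑ z : Fin n → β, (∏ i, p (z i)) * (g x + ∑ k, g (z k)) = g x := by
      intro x
      simp only [mul_add, sum_add_distrib, ih, ← sum_mul, sum_prod_pi_eq_one hp1]
      ring
    rw [sum_prod_pi_mul_fin_succ]
    simpa only [Fin.sum_univ_succ, Fin.cons_zero, Fin.cons_succ, h] using hg

lemma sum_prod_pi_mul_sum_sq (hp1 : ∑ x, p x = 1) {g : β → ℝ} (hg : ∑ x, p x * g x = 0)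
    (n : ℕ) : ∑ z : Fin n → β, (∏ i, p (z i)) * (∑ k, g (z k)) ^ 2
      = n * ∑ x, p x * g x ^ 2 := by
  induction n with
  | zero => simp
  | succ n ih =>
    have h : ∀ x, ∑ z : Fin n → β, (∏ i, p (z i)) * (g x + ∑ k, g (z k)) ^ 2
        = g x ^ 2 + n * ∑ x, p x * g x ^ 2 := by
      intro x
      have hexpand : ∀ z : Fin n → β, (∏ i, p (z i)) * (g x + ∑ k, g (z k)) ^ 2
          = g x ^ 2 * ∏ i, p (z i) + 2 * g x * ((∏ i, p (z i)) * ∑ k, g (z k))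
            + (∏ i, p (z i)) * (∑ k, g (z k)) ^ 2 := fun z => by ring
      simp only [hexpand, sum_add_distrib, ← mul_sum, sum_prod_pi_eq_one hp1,
        sum_prod_pi_mul_sum_eq_zero hp1 hg, ih]
      ring
    rw [sum_prod_pi_mul_fin_succ]
    simp only [Fin.sum_univ_succ, Fin.cons_zero, Fin.cons_succ, h, mul_add, sum_add_distrib,
      ← sum_mul, hp1]
    push_cast
    ring

lemma sum_prod_pi_filter_rpow_lt_le (hp0 : ∀ x, 0 ≤ p x) (hp1 : ∑ x, p x = 1) {n : ℕ}
    (hn : 0 < n) {ε : ℝ} (hε : 0 < ε) :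
    ∑ z : Fin n → β with (2 : ℝ) ^ (-(n * (entropy p - ε))) < ∏ i, p (z i), ∏ i, p (z i)
      ≤ varentropy p / (n * ε ^ 2) := by
  set g : β → ℝ := fun x => -logb 2 (p x) - entropy p
  have hg : ∑ x, p x * g x = 0 := by
    simp only [g, mul_sub, sum_sub_distrib, ← sum_mul, hp1, entropy, mul_neg, sum_neg_distrib]
    ring
  have hsub : ∀ z : Fin n → β, (2 : ℝ) ^ (-(n * (entropy p - ε))) < ∏ i, p (z i) →
      n * ε ≤ |∑ k, g (z k)| := by
    intro z hz
    have hlt := sum_neg_logb_lt_of_rpow_neg_lt_prod hz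
    have hsum : ∑ k, g (z k) = ∑ k, -logb 2 (p (z k)) - n * entropy p := by
      simp [g, sum_sub_distrib]
    rw [hsum, le_abs]
    right
    linarith
  have hnε : (0 : ℝ) < n * ε := by positivity
  calc ∑ z : Fin n → β with (2 : ℝ) ^ (-(n * (entropy p - ε))) < ∏ i, p (z i), ∏ i, p (z i)
      ≤ ∑ z : Fin n → β with n * ε ≤ |∑ k, g (z k)|, ∏ i, p (z i) :=
        sum_le_sum_of_subset_of_nonneg (monotone_filter_right _ fun z _ => hsub z)
          fun z _ _ => prod_nonneg fun i _ => hp0 _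
    _ ≤ (∑ z : Fin n → β, (∏ i, p (z i)) * (∑ k, g (z k)) ^ 2) / (n * ε) ^ 2 :=
        sum_filter_le_abs_le_sum_mul_sq_div _ (fun z _ => prod_nonneg fun i _ => hp0 _) hnε
    _ = varentropy p / (n * ε ^ 2) := by
        rw [sum_prod_pi_mul_sum_sq hp1 hg, varentropy]
        field_simp
        rfl

end IID

lemma sum_filter_decoded_le {X S C : Type*} [Fintype X] [Fintype S] [Fintype C] [DecidableEq X]
    {q : X × S → ℝ} (hq0 : ∀ w, 0 ≤ q w) (e : X × S → C) (d : C → X) {θ : ℝ} (hθ : 0 ≤ θ) :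
    ∑ w with d (e w) = w.1, q w
      ≤ ∑ x with θ < ∑ s, q (x, s), ∑ s, q (x, s) + Fintype.card S * Fintype.card C * θ := by
  have hcard : #{w | d (e w) = w.1} ≤ Fintype.card C * Fintype.card S := by
    rw [← Fintype.card_prod, ← card_univ]
    refine card_le_card_of_injOn (fun w => (e w, w.2)) (fun w _ => mem_coe.2 (mem_univ _)) ?_
    intro w hw w' hw' h
    simp only [coe_filter, mem_univ, true_and, Set.mem_ofPred_eq, Prod.mk.injEq] at hw hw' h
    exact Prod.ext (hw.symm.trans (h.1 ▸ hw')) h.2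
  have hpoint : ∀ w, (if d (e w) = w.1 then q w else 0)
      ≤ (if θ < ∑ s, q (w.1, s) then q w else 0) + (if d (e w) = w.1 then θ else 0) := by
    intro w
    have hle : q w ≤ ∑ s, q (w.1, s) :=
      single_le_sum (f := fun s => q (w.1, s)) (fun s _ => hq0 _) (mem_univ w.2)
    split_ifs <;> linarith [hq0 w]
  have hhigh : ∑ w : X × S, (if θ < ∑ s, q (w.1, s) then q w else 0)
      = ∑ x with θ < ∑ s, q (x, s), ∑ s, q (x, s) := by
    rw [Fintype.sum_prod_type, sum_filter]
    exact sum_congr rfl fun x _ => by split_ifs <;> simp [*]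
  calc ∑ w with d (e w) = w.1, q w
      ≤ ∑ w : X × S, ((if θ < ∑ s, q (w.1, s) then q w else 0)
          + (if d (e w) = w.1 then θ else 0)) := by
        rw [sum_filter]; exact sum_le_sum fun w _ => hpoint w
    _ = ∑ x with θ < ∑ s, q (x, s), ∑ s, q (x, s) + #{w | d (e w) = w.1} * θ := by
        rw [sum_add_distrib, hhigh, ← sum_filter, sum_const, nsmul_eq_mul]
    _ ≤ _ := by
        gcongr
        rw [mul_comm (Fintype.card S : ℝ)]
        exact_mod_cast hcard

lemma one_sub_le_of_sw_code {𝒴₁ 𝒴₂ 𝒮 : Type*} [Fintype 𝒴₁] [Fintype 𝒴₂] [Fintype 𝒮]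
    [DecidableEq 𝒴₁] [DecidableEq 𝒴₂] {p : 𝒴₁ × 𝒴₂ → ℝ} (hp0 : ∀ x, 0 ≤ p x)
    (hp1 : ∑ x, p x = 1) {n : ℕ} (hn : 0 < n) {q : (Fin n → 𝒴₁) × (Fin n → 𝒴₂) × 𝒮 → ℝ}
    (hq0 : ∀ w, 0 ≤ q w) (hq1 : ∑ w, q w = 1)
    (hmarg : ∀ y₁ y₂, ∑ s, q (y₁, y₂, s) = ∏ k, p (y₁ k, y₂ k))
    {M₁ M₂ : ℕ} (f₁ : (Fin n → 𝒴₁) × 𝒮 → Fin M₁) (f₂ : (Fin n → 𝒴₂) × 𝒮 → Fin M₂)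
    (g : Fin M₁ × Fin M₂ → (Fin n → 𝒴₁) × (Fin n → 𝒴₂)) {δ ε : ℝ} (hε : 0 < ε)
    (herr : ∑ w with g (f₁ (w.1, w.2.2), f₂ (w.2.1, w.2.2)) ≠ (w.1, w.2.1), q w ≤ δ) :
    1 - δ ≤ varentropy p / (n * ε ^ 2)
      + Fintype.card 𝒮 * (M₁ * M₂ * (2 : ℝ) ^ (-(n * (entropy p - ε)))) := by
  set θ : ℝ := 2 ^ (-(n * (entropy p - ε)))
  have hsuccess : 1 - δ ≤ ∑ w with g (f₁ (w.1, w.2.2), f₂ (w.2.1, w.2.2)) = (w.1, w.2.1), q w := by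
    rw [← hq1, ← sum_filter_add_sum_filter_not univ
      (fun w => g (f₁ (w.1, w.2.2), f₂ (w.2.1, w.2.2)) = (w.1, w.2.1))]
    linarith
  have hdecoded := sum_filter_decoded_le (q := fun v => q (Equiv.prodAssoc _ _ _ v))
    (fun v => hq0 _) (fun v => (f₁ (v.1.1, v.2), f₂ (v.1.2, v.2))) g (rpow_pos_of_pos two_pos _).le
    (θ := θ)
  have htypical : ∑ x : (Fin n → 𝒴₁) × (Fin n → 𝒴₂) with θ < ∏ k, p (x.1 k, x.2 k),
      ∏ k, p (x.1 k, x.2 k) ≤ varentropy p / (n * ε ^ 2) := by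
    rw [sum_filter, ← (Equiv.arrowProdEquivProdArrow _ _ _).sum_comp, ← sum_filter]
    exact sum_prod_pi_filter_rpow_lt_le hp0 hp1 hn hε
  rw [sum_filter, ← (Equiv.prodAssoc _ _ _).sum_comp, ← sum_filter] at hsuccess
  simp only [Equiv.prodAssoc_apply, hmarg, Fintype.card_prod, Fintype.card_fin,
    Nat.cast_mul] at hsuccess hdecoded
  linarith

lemma mul_mul_two_rpow_le_pow {M₁ M₂ n : ℕ} {R₁ R₂ δ H ε : ℝ}
    (hM₁ : (M₁ : ℝ) ≤ 2 ^ (n * (R₁ + δ))) (hM₂ : (M₂ : ℝ) ≤ 2 ^ (n * (R₂ + δ)))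
    (hR : R₁ + R₂ + 2 * δ + 2 * ε ≤ H) :
    M₁ * M₂ * (2 : ℝ) ^ (-(n * (H - ε))) ≤ ((2 : ℝ) ^ (-ε)) ^ n := by
  calc M₁ * M₂ * (2 : ℝ) ^ (-(n * (H - ε)))
      ≤ 2 ^ (n * (R₁ + δ)) * 2 ^ (n * (R₂ + δ)) * (2 : ℝ) ^ (-(n * (H - ε))) := by
        gcongr
    _ = 2 ^ (n * (R₁ + R₂ + 2 * δ + ε - H)) := by
        rw [← rpow_add two_pos, ← rpow_add two_pos]
        ring_nf
    _ ≤ 2 ^ (-ε * n) :=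
        rpow_le_rpow_of_exponent_le one_le_two (by nlinarith [(n.cast_nonneg : (0 : ℝ) ≤ n)])
    _ = ((2 : ℝ) ^ (-ε)) ^ n := rpow_mul_natCast zero_le_two _ _

/-- Lemma 1: in the Slepian–Wolf setting for a discrete memoryless pair source `(Y₁, Y₂)` with
finite alphabets, where side information `S` (jointly distributed with the source blocks, with
correct marginal) is available only to the two encoders but not to the decoder, any achievable
rate pair `(R̃₁, R̃₂)` must satisfy `R̃₁ + R̃₂ ≥ H(Y₁, Y₂)` (entropy in bits). -/
theorem sw_encoder_side_info_converse
    {𝒴₁ 𝒴₂ 𝒮 : Type*} [Fintype 𝒴₁] [Fintype 𝒴₂] [Fintype 𝒮]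
    [DecidableEq 𝒴₁] [DecidableEq 𝒴₂]
    (p : 𝒴₁ × 𝒴₂ → ℝ) (hp0 : ∀ x, 0 ≤ p x) (hp1 : ∑ x, p x = 1)
    (q : (n : ℕ) → ((Fin n → 𝒴₁) × (Fin n → 𝒴₂) × 𝒮) → ℝ)
    (hq0 : ∀ n w, 0 ≤ q n w) (hq1 : ∀ n, ∑ w, q n w = 1)
    (hmarg : ∀ n (y₁ : Fin n → 𝒴₁) (y₂ : Fin n → 𝒴₂),
      ∑ s, q n (y₁, y₂, s) = ∏ k, p (y₁ k, y₂ k))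
    (R₁ R₂ : ℝ)
    (hach : ∀ δ > (0 : ℝ), ∃ N : ℕ, ∀ n ≥ N,
      ∃ (M₁ M₂ : ℕ)
        (f₁ : (Fin n → 𝒴₁) × 𝒮 → Fin M₁) (f₂ : (Fin n → 𝒴₂) × 𝒮 → Fin M₂)
        (g : Fin M₁ × Fin M₂ → (Fin n → 𝒴₁) × (Fin n → 𝒴₂)),
        (M₁ : ℝ) ≤ 2 ^ ((n : ℝ) * (R₁ + δ)) ∧
        (M₂ : ℝ) ≤ 2 ^ ((n : ℝ) * (R₂ + δ)) ∧
        ∑ w ∈ Finset.univ.filter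
            (fun w : (Fin n → 𝒴₁) × (Fin n → 𝒴₂) × 𝒮 =>
              g (f₁ (w.1, w.2.2), f₂ (w.2.1, w.2.2)) ≠ (w.1, w.2.1)),
          q n w ≤ δ) :
    R₁ + R₂ ≥ -∑ x : 𝒴₁ × 𝒴₂, p x * logb 2 (p x) := by
  by_contra! hlt
  change R₁ + R₂ < entropy p at hlt
  set ε := (entropy p - (R₁ + R₂)) / 4 with hε_def
  have hε : 0 < ε := by linarith
  obtain ⟨N, hN⟩ := hach (min ε (1 / 2)) (lt_min hε one_half_pos)
  have hlim : Tendsto (fun n : ℕ => varentropy p / ε ^ 2 / n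
      + Fintype.card 𝒮 * ((2 : ℝ) ^ (-ε)) ^ n) atTop (𝓝 0) := by
    simpa using (tendsto_const_div_atTop_nhds_zero_nat _).add
      ((tendsto_pow_atTop_nhds_zero_of_lt_one (by positivity)
        (rpow_lt_one_of_one_lt_of_neg one_lt_two (neg_neg_of_pos hε))).const_mul _)
  obtain ⟨n, ⟨hnN, hn⟩, hsmall⟩ := ((eventually_ge_atTop N).and (eventually_gt_atTop 0)).and
    (hlim.eventually (gt_mem_nhds one_half_pos)) |>.exists
  obtain ⟨M₁, M₂, f₁, f₂, g, hM₁, hM₂, herr⟩ := hN n hnN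
  have hsuccess := one_sub_le_of_sw_code hp0 hp1 hn (hq0 n) (hq1 n) (hmarg n) f₁ f₂ g hε herr
  have hrate := mul_mul_two_rpow_le_pow hM₁ hM₂ (H := entropy p) (ε := ε)
    (by linarith [min_le_left ε (1 / 2)])
  rw [mul_comm (n : ℝ), ← div_div] at hsuccess
  linarith [min_le_right ε (1 / 2), mul_le_mul_of_nonneg_left hrate (Fintype.card 𝒮).cast_nonneg]
end
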